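/- Properties P₂ and P₃ are stable under composition of affine tasks: for tasks A on n = 3^ℓ and B on m = 3^{ℓ'} (ℓ, ℓ' ≥ 1), {0,1} ∈ A⋆B if and only if {0,1} ∈ A and {0,1} ∈ B, and {n·m−1, n·m} ∈ A⋆B if and only if {n−1,n} ∈ A and {m−1,m} ∈ B. Consequently, for every k ≥ 1, P₂(A^{⋆k}) ↔ P₂(A) and P₃(A^{⋆k}) ↔ P₃(A). -/

import Mathlib

/-!
2-process affine tasks, modeled combinatorially.
The ℓ-th iterated standard chromatic subdivision of the 1-simplex is the path
graph on vertices `{0, …, n}`, `n = 3^ℓ`, whose edges are the pairs `{i, i+1}`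
for `0 ≤ i < n`; vertex `i` has color `i % 2`, vertex `0` is the solo vertex of
process `p₀` and vertex `n` the solo vertex of `p₁`.  An edge `{i, i+1}` is
encoded by its left endpoint `i`, and a 2-process affine task on `n` is a
nonempty finite set `A : Finset ℕ` of such edges (left endpoints `< n`).
-/

/-- `StepRel A x y`: the vertices `x` and `y` are joined by an edge of `A`
(the edge `{i, i+1}` being encoded by its left endpoint `i`). -/
def StepRel (A : Finset ℕ) (x y : ℕ) : Prop :=
  (y = x + 1 ∧ x ∈ A) ∨ (x = y + 1 ∧ y ∈ A)

/-- `P₁(A)`: the vertices `0` and `n` are joined by a path all of whose edges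
lie in `A`. -/
def P1 (n : ℕ) (A : Finset ℕ) : Prop := Relation.ReflTransGen (StepRel A) 0 n

/-- `P₂(A)`: the edge `{0, 1}` belongs to `A`. -/
def P2 (A : Finset ℕ) : Prop := 0 ∈ A

/-- `P₃(A)`: the edge `{n-1, n}` belongs to `A`. -/
def P3 (n : ℕ) (A : Finset ℕ) : Prop := n - 1 ∈ A

open Classical in
/-- The class of a 2-process affine task `A` on `{0,…,n}`:
`1` if `P₁(A)`; `2` if `¬P₁ ∧ P₂ ∧ P₃`; `3` if `¬P₁ ∧ P₂ ∧ ¬P₃`;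
`4` if `¬P₁ ∧ ¬P₂ ∧ P₃`; `5` if `¬P₁ ∧ ¬P₂ ∧ ¬P₃`. -/
noncomputable def classOf (n : ℕ) (A : Finset ℕ) : ℕ :=
  if P1 n A then 1
  else if P2 A then (if P3 n A then 2 else 3)
  else (if P3 n A then 4 else 5)

/-- The class order `⊑` on `{1, …, 5}`: `c ⊑ c'` iff `c = c'`, or `c = 1`,
or `c' = 5`, or (`c = 2` and `c' ∈ {3, 4}`). -/
def ClassLE (c c' : ℕ) : Prop :=
  c = c' ∨ c = 1 ∨ c' = 5 ∨ (c = 2 ∧ (c' = 3 ∨ c' = 4))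

/-- The composition `A ⋆ B` of a task `A` on `{0,…,n}` with a task `B` on
`{0,…,m}`: each edge of `A` is replaced by an appropriately oriented copy of
`B`; its edges are `{i·m + r, i·m + r + 1}` for `{i, i+1} ∈ A` and
`{j, j+1} ∈ B`, where `r = j` if `i` is even and `r = m - 1 - j` if `i` is odd
(edges encoded by left endpoints). -/
def comp (m : ℕ) (A B : Finset ℕ) : Finset ℕ :=
  (A ×ˢ B).image fun p => p.1 * m + (if Even p.1 then p.2 else m - 1 - p.2)

/-- `iterTask n A k` is the iterate `A^{⋆k}` (for `k ≥ 1`) of a task `A` on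
`{0,…,n}`, a task on `{0,…,n^k}`: `A^{⋆1} = A`, `A^{⋆(k+1)} = A^{⋆k} ⋆ A`.
(The value at `k = 0` is irrelevant and set to `A`.) -/
def iterTask (n : ℕ) (A : Finset ℕ) : ℕ → Finset ℕ
  | 0 => A
  | 1 => A
  | k + 2 => comp n (iterTask n A (k + 1)) A

/-- A chromatic carrier-preserving simplicial map `δ` from a task `A` on
`{0,…,n}` to the subdivided 1-simplex on `{0,…,m}`: `δ` maps `{0,…,n}` to
`{0,…,m}`; `δ i ≡ i (mod 2)` for every vertex incident to an edge of `A`;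
`|δ (i+1) - δ i| = 1` for every edge `{i, i+1} ∈ A`; `δ 0 = 0` whenever
`{0,1} ∈ A`; and `δ n = m` whenever `{n-1, n} ∈ A`. -/
def IsCCMap (n m : ℕ) (A : Finset ℕ) (δ : ℕ → ℕ) : Prop :=
  (∀ i ≤ n, δ i ≤ m) ∧
  (∀ i ∈ A, δ i % 2 = i % 2 ∧ δ (i + 1) % 2 = (i + 1) % 2) ∧
  (∀ i ∈ A, δ (i + 1) = δ i + 1 ∨ δ i = δ (i + 1) + 1) ∧
  (0 ∈ A → δ 0 = 0) ∧
  (n - 1 ∈ A → δ n = m)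

/-- The image task `δ(A) = { {δ i, δ (i+1)} : {i, i+1} ∈ A }`
(edges encoded by left endpoints, i.e. by `min (δ i) (δ (i+1))`). -/
def imageTask (A : Finset ℕ) (δ : ℕ → ℕ) : Finset ℕ :=
  A.image fun i => min (δ i) (δ (i + 1))

/-- `Solves m n B A`: the affine model `B*` of a task `B` on `{0,…,m}` solves
the task `A` on `{0,…,n}`, i.e. there exist `k ≥ 1` and a chromatic
carrier-preserving simplicial map `δ` from `B^{⋆k}` (a task on `{0,…,m^k}`)
to the subdivided 1-simplex on `{0,…,n}` with `δ(B^{⋆k}) ⊆ A`. -/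
def Solves (m n : ℕ) (B A : Finset ℕ) : Prop :=
  ∃ k, 1 ≤ k ∧ ∃ δ : ℕ → ℕ,
    IsCCMap (m ^ k) n (iterTask m B k) δ ∧ imageTask (iterTask m B k) δ ⊆ A

/-!
Write an edge of `A ⋆ B` as `i * m + r` with `r < m`: division with remainder recovers the edge
`i` of `A`, and `r` determines the edge of `B` because the reorientation `j ↦ m - 1 - j` is an
involution of `{0, …, m - 1}`. The edge `{0, 1}` sits at `i = r = 0` and the edge
`{n·m - 1, n·m}` at `i = n - 1`, `r = m - 1`; for odd `n` neither block is reoriented.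
-/

def orient (m i j : ℕ) : ℕ := if Even i then j else m - 1 - j

lemma orient_of_even {m i : ℕ} (hi : Even i) (j : ℕ) : orient m i j = j := if_pos hi

lemma orient_lt {m i j : ℕ} (hj : j < m) : orient m i j < m := by
  unfold orient; split <;> omega

lemma orient_orient {m i j : ℕ} (hj : j < m) : orient m i (orient m i j) = j := by
  unfold orient; split <;> omega

lemma eq_of_mul_add_eq_mul_add {m i i' r r' : ℕ} (hr : r < m) (hr' : r' < m)
    (h : i * m + r = i' * m + r') : i = i' ∧ r = r' := by
  have hm : 0 < m := by omega
  obtain ⟨hdiv, hmod⟩ :=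
    (Nat.div_mod_unique (a := i * m + r) (d := i) hm).mpr ⟨by ring, hr⟩
  obtain ⟨hdiv', hmod'⟩ :=
    (Nat.div_mod_unique (a := i' * m + r') (d := i') hm).mpr ⟨by ring, hr'⟩
  rw [h] at hdiv hmod
  exact ⟨hdiv.symm.trans hdiv', hmod.symm.trans hmod'⟩

lemma mem_comp {m : ℕ} {A B : Finset ℕ} {x : ℕ} :
    x ∈ comp m A B ↔ ∃ i ∈ A, ∃ j ∈ B, i * m + orient m i j = x := by
  simp only [comp, orient, Finset.mem_image, Finset.mem_product, Prod.exists, and_assoc,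
    exists_and_left]

lemma mul_add_mem_comp_iff {m : ℕ} {A B : Finset ℕ} (hB : ∀ j ∈ B, j < m) {i r : ℕ}
    (hr : r < m) : i * m + r ∈ comp m A B ↔ i ∈ A ∧ orient m i r ∈ B := by
  rw [mem_comp]
  constructor
  · rintro ⟨i', hi', j, hj, h⟩
    have hjm := hB j hj
    obtain ⟨rfl, hjr⟩ := eq_of_mul_add_eq_mul_add (orient_lt hjm) hr h
    exact ⟨hi', by rwa [← hjr, orient_orient hjm]⟩
  · rintro ⟨hi, hj⟩
    exact ⟨i, hi, _, hj, by rw [orient_orient hr]⟩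

theorem P2_comp {m : ℕ} (hm : 0 < m) {A B : Finset ℕ} (hB : ∀ j ∈ B, j < m) :
    P2 (comp m A B) ↔ P2 A ∧ P2 B := by
  simpa [P2, orient_of_even Even.zero] using mul_add_mem_comp_iff (A := A) hB (i := 0) hm

theorem P3_comp {n m : ℕ} (hn : Odd n) (hm : 0 < m) {A B : Finset ℕ}
    (hB : ∀ j ∈ B, j < m) : P3 (n * m) (comp m A B) ↔ P3 n A ∧ P3 m B := by
  have hlast : n * m - 1 = (n - 1) * m + (m - 1) := by
    obtain ⟨t, rfl⟩ := hn
    simp only [add_tsub_cancel_right, add_mul, one_mul]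
    omega
  unfold P3
  rw [hlast, mul_add_mem_comp_iff hB (by omega),
    orient_of_even (Nat.Odd.sub_odd hn odd_one)]

lemma iterTask_succ {n k : ℕ} (A : Finset ℕ) (hk : 1 ≤ k) :
    iterTask n A (k + 1) = comp n (iterTask n A k) A := by
  cases k with
  | zero => omega
  | succ k => rfl

theorem P2_iterTask {n : ℕ} (hn : 0 < n) {A : Finset ℕ} (hA : ∀ i ∈ A, i < n) {k : ℕ}
    (hk : 1 ≤ k) : P2 (iterTask n A k) ↔ P2 A := by
  induction k, hk using Nat.le_induction with
  | base => rfl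
  | succ k hk ih => rw [iterTask_succ A hk, P2_comp hn hA, ih, and_self]

theorem P3_iterTask {n : ℕ} (hn : Odd n) {A : Finset ℕ} (hA : ∀ i ∈ A, i < n) {k : ℕ}
    (hk : 1 ≤ k) : P3 (n ^ k) (iterTask n A k) ↔ P3 n A := by
  induction k, hk using Nat.le_induction with
  | base => rw [pow_one]; rfl
  | succ k hk ih => rw [iterTask_succ A hk, pow_succ, P3_comp hn.pow hn.pos hA, ih, and_self]

theorem P2_P3_stable_comp_general
    (ℓ ℓ' n m : ℕ) (hn : n = 3 ^ ℓ) (hm : m = 3 ^ ℓ')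
    (A B : Finset ℕ) (hAlt : ∀ i ∈ A, i < n)
    (hBlt : ∀ i ∈ B, i < m) :
    (P2 (comp m A B) ↔ P2 A ∧ P2 B) ∧
    (P3 (n * m) (comp m A B) ↔ P3 n A ∧ P3 m B) ∧
    (∀ k, 1 ≤ k →
      ((P2 (iterTask n A k) ↔ P2 A) ∧ (P3 (n ^ k) (iterTask n A k) ↔ P3 n A))) := by
  have hnodd : Odd n := hn ▸ Odd.pow (by decide)
  have hmodd : Odd m := hm ▸ Odd.pow (by decide)
  exact ⟨P2_comp hmodd.pos hBlt, P3_comp hnodd hmodd.pos hBlt,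
    fun k hk => ⟨P2_iterTask hnodd.pos hAlt hk, P3_iterTask hnodd hAlt hk⟩⟩

/-- `P₂` and `P₃` are stable under composition of affine tasks:
`{0,1} ∈ A⋆B ↔ {0,1} ∈ A ∧ {0,1} ∈ B`, and
`{n·m − 1, n·m} ∈ A⋆B ↔ {n−1,n} ∈ A ∧ {m−1,m} ∈ B`; consequently, for every
`k ≥ 1`, `P₂(A^{⋆k}) ↔ P₂(A)` and `P₃(A^{⋆k}) ↔ P₃(A)`. -/
theorem P2_P3_stable_comp
    (ℓ ℓ' n m : ℕ) (hℓ : 1 ≤ ℓ) (hℓ' : 1 ≤ ℓ') (hn : n = 3 ^ ℓ) (hm : m = 3 ^ ℓ')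
    (A B : Finset ℕ) (hAne : A.Nonempty) (hAlt : ∀ i ∈ A, i < n)
    (hBne : B.Nonempty) (hBlt : ∀ i ∈ B, i < m) :
    (P2 (comp m A B) ↔ P2 A ∧ P2 B) ∧
    (P3 (n * m) (comp m A B) ↔ P3 n A ∧ P3 m B) ∧
    (∀ k, 1 ≤ k →
      ((P2 (iterTask n A k) ↔ P2 A) ∧ (P3 (n ^ k) (iterTask n A k) ↔ P3 n A))) :=
  P2_P3_stable_comp_general ℓ ℓ' n m hn hm A B hAlt hBlt
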